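/- arXiv:1509.07352 — 10 statements merged into one kernel-verified Lean document; each statement's English description precedes it below -/
import Mathlib

section
/- For fixed integers r, j ≥ 0 with r > 0 or j > 0, and for all n ≥ 1, p^r_j(n+4) ≡ p^r_j(n) (mod 10); that is, the last digit of the sequence p^r_j(n) is periodic with period 4. -/
/-- `p r j n` : the number of restricted barred preferential arrangements of an `n`-set with
`r` restricted sections and `j` free sections, given by the convergent series
`p^r_j(n) = \sum_{s=0}^\infty C(j+s-1, s) (r+s)^n / 2^(j+s)`
(the coefficient of `m^n/n!` in `e^{rm}/(2-e^m)^j`). -/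
noncomputable def p (r j n : ℕ) : ℝ :=
  ∑' s : ℕ, ((j + s - 1).choose s : ℝ) * ((r + s : ℕ) : ℝ) ^ n / 2 ^ (j + s)

/-!
Substituting `u = eᵐ - 1` turns `e^{rm}/(2 - eᵐ)^j` into `(1 + u)^r (1 - u)^{-j}`, a power
series with integer coefficients `a_k`. Since `(eᵐ - 1)^k` has `n`-th coefficient
`Δᵏ[xⁿ](0) / n! = ∑ᵢ (-1)^(k-i) C(k,i) iⁿ / n!`, this gives
`p^r_j(n) = ∑ₖ a_k ∑ᵢ (-1)^(k-i) C(k,i) iⁿ`, while `i^(n+4) ≡ iⁿ (mod 10)` for `n ≥ 1`.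
The identification with the series is by induction on `n`, both sides satisfying
`p^r_j(n+1) = r p^r_j(n) + j p^{r+1}_{j+1}(n)` (differentiate the generating function in `m`).
-/

open Finset PowerSeries

namespace BPA

def fwdDiffPow (n k : ℕ) : ℤ := (fwdDiff 1)^[k] (fun x : ℤ => x ^ n) 0

lemma fwdDiffPow_eq_sum (n k : ℕ) :
    fwdDiffPow n k = ∑ i ∈ range (k + 1), (-1) ^ (k - i) * k.choose i * (i : ℤ) ^ n := by
  simp [fwdDiffPow, fwdDiff_iter_eq_sum_shift]

lemma fwdDiffPow_eq_zero_of_lt {n k : ℕ} (h : n < k) : fwdDiffPow n k = 0 := by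
  simp [fwdDiffPow, fwdDiff_iter_pow_eq_zero_of_lt h]

lemma fwdDiffPow_succ_zero (n : ℕ) : fwdDiffPow (n + 1) 0 = 0 := by
  simp [fwdDiffPow]

lemma fwdDiffPow_succ_succ (n k : ℕ) :
    fwdDiffPow (n + 1) (k + 1) = (k + 1) * (fwdDiffPow n k + fwdDiffPow n (k + 1)) := by
  have shift : fwdDiffPow n k + fwdDiffPow n (k + 1) =
      ∑ i ∈ range (k + 1), (-1) ^ (k - i) * k.choose i * ((i : ℤ) + 1) ^ n := by
    rw [fwdDiffPow, fwdDiffPow, Function.iterate_succ_apply', fwdDiff, add_sub_cancel,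
      fwdDiff_iter_eq_sum_shift]
    simp [add_comm]
  rw [shift, fwdDiffPow_eq_sum, sum_range_succ', mul_sum]
  simp only [Nat.cast_zero, zero_pow n.succ_ne_zero, mul_zero, add_zero]
  refine sum_congr rfl fun i _ => ?_
  have hchoose : ((k + 1).choose (i + 1) : ℤ) * (i + 1) = (k + 1) * k.choose i := by
    exact_mod_cast (Nat.add_one_mul_choose_eq k i).symm
  rw [Nat.add_sub_add_right]
  push_cast
  linear_combination (-1) ^ (k - i) * ((i : ℤ) + 1) ^ n * hchoose

lemma ten_dvd_pow_add_four_sub_pow (x : ℤ) {n : ℕ} (hn : 1 ≤ n) :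
    (10 : ℤ) ∣ x ^ (n + 4) - x ^ n := by
  have fermat : ∀ y : ZMod 10, y ^ 5 = y := by decide
  refine (ZMod.intCast_zmod_eq_zero_iff_dvd _ 10).mp ?_
  obtain ⟨m, rfl⟩ := Nat.exists_eq_add_of_le' hn
  push_cast
  rw [show m + 1 + 4 = m + 5 by ring, pow_add, pow_add, fermat, pow_one, sub_self]

lemma ten_dvd_fwdDiffPow_add_four_sub {n : ℕ} (hn : 1 ≤ n) (k : ℕ) :
    (10 : ℤ) ∣ fwdDiffPow (n + 4) k - fwdDiffPow n k := by
  rw [fwdDiffPow_eq_sum, fwdDiffPow_eq_sum, ← sum_sub_distrib]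
  exact dvd_sum fun i _ => by
    rw [← mul_sub]; exact dvd_mul_of_dvd_right (ten_dvd_pow_add_four_sub_pow _ hn) _

/-- `n! [mⁿ] f(eᵐ - 1)`. -/
noncomputable def expSubOneCoeff (n : ℕ) (f : ℤ⟦X⟧) : ℤ :=
  ∑ k ∈ range (n + 1), fwdDiffPow n k * coeff k f

lemma expSubOneCoeff_eq_sum {n N : ℕ} (h : n < N) (f : ℤ⟦X⟧) :
    expSubOneCoeff n f = ∑ k ∈ range N, fwdDiffPow n k * coeff k f := by
  refine sum_subset (range_subset_range.mpr h) fun k _ hk => ?_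
  rw [fwdDiffPow_eq_zero_of_lt (by simpa using hk), zero_mul]

lemma expSubOneCoeff_add_nsmul (n a b : ℕ) (f g : ℤ⟦X⟧) :
    expSubOneCoeff n (a • f + b • g) = a * expSubOneCoeff n f + b * expSubOneCoeff n g := by
  simp only [expSubOneCoeff, map_add, map_nsmul, mul_sum, ← sum_add_distrib]
  exact sum_congr rfl fun k _ => by ring

lemma expSubOneCoeff_zero (f : ℤ⟦X⟧) : expSubOneCoeff 0 f = constantCoeff f := by
  simp [expSubOneCoeff, fwdDiffPow]

lemma expSubOneCoeff_succ (n : ℕ) (f : ℤ⟦X⟧) :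
    expSubOneCoeff (n + 1) f = expSubOneCoeff n ((1 + X) * d⁄dX ℤ f) := by
  have hcoeff : ∀ k,
      coeff k ((1 + X) * d⁄dX ℤ f) = coeff (k + 1) f * (k + 1) + coeff k f * k := by
    rintro (_ | k) <;>
      simp [add_mul, coeff_derivative, coeff_succ_X_mul, coeff_zero_X_mul,
        -coeff_zero_eq_constantCoeff]
  -- reindexing `k ↦ k + 1`: the new boundary terms are `k = 0` (factor `k`) and
  -- `k = n + 1` (where `fwdDiffPow n (n + 1) = 0`)
  have hshift : ∑ k ∈ range (n + 1), (k + 1 : ℤ) * fwdDiffPow n (k + 1) * coeff (k + 1) f =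
      ∑ k ∈ range (n + 1), (k : ℤ) * fwdDiffPow n k * coeff k f := by
    have h := sum_range_succ' (fun k => (k : ℤ) * fwdDiffPow n k * coeff k f) (n + 1)
    rw [sum_range_succ, fwdDiffPow_eq_zero_of_lt n.lt_succ_self] at h
    push_cast at h
    simpa using h.symm
  calc expSubOneCoeff (n + 1) f
      = ∑ k ∈ range (n + 1),
          (k + 1 : ℤ) * (fwdDiffPow n k + fwdDiffPow n (k + 1)) * coeff (k + 1) f := by
        rw [expSubOneCoeff, sum_range_succ', fwdDiffPow_succ_zero, zero_mul, add_zero]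
        simp only [fwdDiffPow_succ_succ]
    _ = ∑ k ∈ range (n + 1), (k + 1 : ℤ) * fwdDiffPow n k * coeff (k + 1) f +
          ∑ k ∈ range (n + 1), (k : ℤ) * fwdDiffPow n k * coeff k f := by
        rw [← hshift, ← sum_add_distrib]
        exact sum_congr rfl fun k _ => by ring
    _ = expSubOneCoeff n ((1 + X) * d⁄dX ℤ f) := by
        rw [expSubOneCoeff, ← sum_add_distrib]
        exact sum_congr rfl fun k _ => by rw [hcoeff]; ring

lemma ten_dvd_expSubOneCoeff_add_four_sub {n : ℕ} (hn : 1 ≤ n) (f : ℤ⟦X⟧) :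
    (10 : ℤ) ∣ expSubOneCoeff (n + 4) f - expSubOneCoeff n f := by
  rw [expSubOneCoeff, expSubOneCoeff_eq_sum (by omega : n < n + 5), ← sum_sub_distrib]
  exact dvd_sum fun k _ => by
    rw [← sub_mul]; exact dvd_mul_of_dvd_left (ten_dvd_fwdDiffPow_add_four_sub hn k) _

section

variable {R : Type*} [CommRing R]

lemma derivative_mk_one : d⁄dX R (PowerSeries.mk 1) = PowerSeries.mk 1 ^ 2 := by
  have h := congrArg (d⁄dX R) (mk_one_mul_one_sub_eq_one R)
  rw [Derivation.leibniz, map_sub, derivative_X, Derivation.map_one_eq_zero, zero_sub,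
    smul_eq_mul, smul_eq_mul] at h
  calc d⁄dX R (PowerSeries.mk 1)
      = d⁄dX R (PowerSeries.mk 1) * (PowerSeries.mk 1 * (1 - X)) := by
        rw [mk_one_mul_one_sub_eq_one, mul_one]
    _ = PowerSeries.mk 1 ^ 2 := by linear_combination (PowerSeries.mk 1 : R⟦X⟧) * h

lemma derivative_mk_one_pow (j : ℕ) :
    d⁄dX R (PowerSeries.mk 1 ^ j) = j • PowerSeries.mk 1 ^ (j + 1) := by
  rcases j with _ | j
  · simp
  · rw [Derivation.leibniz_pow, derivative_mk_one, Nat.add_sub_cancel]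
    simp only [smul_eq_mul, nsmul_eq_mul]
    ring

lemma one_add_X_mul_derivative_pow (r : ℕ) :
    (1 + X : R⟦X⟧) * d⁄dX R ((1 + X) ^ r) = r • (1 + X) ^ r := by
  rcases r with _ | r
  · simp
  · rw [Derivation.leibniz_pow, map_add, Derivation.map_one_eq_zero, derivative_X,
      Nat.add_sub_cancel]
    simp only [smul_eq_mul, nsmul_eq_mul]
    ring

end

/-- `(1 + u)^r / (1 - u)^j`, i.e. `e^{rm}/(2 - eᵐ)^j` at `u = eᵐ - 1`. -/
noncomputable def bpaSeries (r j : ℕ) : ℤ⟦X⟧ := (1 + X) ^ r * PowerSeries.mk 1 ^ j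

lemma constantCoeff_bpaSeries (r j : ℕ) : constantCoeff (bpaSeries r j) = 1 := by
  simp [bpaSeries]

lemma one_add_X_mul_derivative_bpaSeries (r j : ℕ) :
    (1 + X) * d⁄dX ℤ (bpaSeries r j) =
      r • bpaSeries r j + j • bpaSeries (r + 1) (j + 1) := by
  have hr := one_add_X_mul_derivative_pow (R := ℤ) r
  simp only [bpaSeries, Derivation.leibniz, derivative_mk_one_pow, smul_eq_mul,
    nsmul_eq_mul] at hr ⊢
  linear_combination (PowerSeries.mk 1 : ℤ⟦X⟧) ^ j * hr

noncomputable def bpaTerm (r j n s : ℕ) : ℝ :=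
  ((j + s - 1).choose s : ℝ) * ((r + s : ℕ) : ℝ) ^ n / 2 ^ (j + s)

lemma hasSum_bpaTerm_zero (r j : ℕ) : HasSum (bpaTerm r j 0) 1 := by
  rcases j with _ | j
  · convert hasSum_ite_eq 0 (1 : ℝ) using 1
    funext s
    rcases s with _ | s <;> simp [bpaTerm]
  · have hterm : ∀ s,
        bpaTerm r (j + 1) 0 s = ((s + j).choose j : ℝ) * 2⁻¹ ^ s / 2 ^ (j + 1) := by
      intro s
      rw [bpaTerm, show j + 1 + s - 1 = s + j by omega, Nat.choose_symm_add, pow_add, inv_pow]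
      field_simp
    have hsum : (1 : ℝ) = 1 / (1 - 2⁻¹) ^ (j + 1) / 2 ^ (j + 1) := by
      rw [show (1 : ℝ) - 2⁻¹ = 2⁻¹ by norm_num, inv_pow, one_div, inv_inv,
        div_self (by positivity)]
    rw [funext hterm, hsum]
    exact (hasSum_choose_mul_geometric_of_norm_lt_one (r := (2⁻¹ : ℝ)) j
      (by norm_num)).div_const _

lemma bpaTerm_succ_zero (r j n : ℕ) : bpaTerm r j (n + 1) 0 = r * bpaTerm r j n 0 := by
  simp only [bpaTerm, add_zero, pow_succ]
  ring

lemma bpaTerm_succ_succ (r j n s : ℕ) :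
    bpaTerm r j (n + 1) (s + 1) =
      r * bpaTerm r j n (s + 1) + j * bpaTerm (r + 1) (j + 1) n s := by
  have hchoose : ((j + s).choose (s + 1) : ℝ) * (s + 1) = (j + s).choose s * j := by
    have h := Nat.choose_succ_right_eq (j + s) s
    rw [Nat.add_sub_cancel] at h
    exact_mod_cast h
  simp only [bpaTerm, show j + (s + 1) - 1 = j + s by omega,
    show r + 1 + s = r + (s + 1) by omega, show j + 1 + s = j + (s + 1) by omega]
  push_cast
  rw [pow_succ]
  linear_combination ((r : ℝ) + s + 1) ^ n / 2 ^ (j + (s + 1)) * hchoose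

lemma hasSum_bpaTerm_succ {r j n : ℕ} {a b : ℝ} (ha : HasSum (bpaTerm r j n) a)
    (hb : HasSum (bpaTerm (r + 1) (j + 1) n) b) :
    HasSum (bpaTerm r j (n + 1)) (r * a + j * b) := by
  rw [← hasSum_nat_add_iff' 1] at ha ⊢
  simp only [range_one, sum_singleton, bpaTerm_succ_succ, bpaTerm_succ_zero] at ha ⊢
  rw [show r * a + j * b - r * bpaTerm r j n 0 = r * (a - bpaTerm r j n 0) + j * b by ring]
  exact (ha.mul_left _).add (hb.mul_left _)

lemma hasSum_bpaTerm (n r j : ℕ) :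
    HasSum (bpaTerm r j n) (expSubOneCoeff n (bpaSeries r j)) := by
  induction n generalizing r j with
  | zero => simpa [expSubOneCoeff_zero, constantCoeff_bpaSeries] using hasSum_bpaTerm_zero r j
  | succ n ih =>
    rw [expSubOneCoeff_succ, one_add_X_mul_derivative_bpaSeries, expSubOneCoeff_add_nsmul]
    push_cast
    exact hasSum_bpaTerm_succ (ih r j) (ih (r + 1) (j + 1))

end BPA

theorem stmt2_general (r j : ℕ) (n : ℕ) (hn : 1 ≤ n) :
    ∃ k : ℤ, p r j (n + 4) - p r j n = 10 * k := by
  have hp : ∀ m, p r j m = BPA.expSubOneCoeff m (BPA.bpaSeries r j) :=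
    fun m => (BPA.hasSum_bpaTerm m r j).tsum_eq
  obtain ⟨k, hk⟩ := BPA.ten_dvd_expSubOneCoeff_add_four_sub hn (BPA.bpaSeries r j)
  exact ⟨k, by rw [hp, hp, ← Int.cast_sub, hk]; push_cast; ring⟩

/-- The last digit of the sequence `p^r_j(n)` has a four cycle:
`p^r_j(n+4) ≡ p^r_j(n) (mod 10)` (the values are integers). -/
theorem stmt2 (r j : ℕ) (h : 0 < r ∨ 0 < j) (n : ℕ) (hn : 1 ≤ n) :
    ∃ k : ℤ, p r j (n + 4) - p r j n = 10 * k :=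
  stmt2_general r j n hn
end

section
/- For all n ≥ 1, j ≥ 1 and r ≥ 0, p^r_j(n) = Σ_{k=0}^{∞} Σ_{s=0}^{k} C(k,s) (−1)^s p^{r+k−s}_{j−1}(n), where the outer sum converges. -/
open Finset Function fwdDiff

section ForwardDifference

variable {M G : Type*} [AddCommMonoid M] [AddCommGroup G]

lemma fwdDiff_iter_eq_zero_of_le {h : M} {f : M → G} {d k : ℕ} (hf : (Δ_[h])^[d] f = 0)
    (hk : d ≤ k) : (Δ_[h])^[k] f = 0 := by
  obtain ⟨e, rfl⟩ := Nat.exists_eq_add_of_le hk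
  rw [add_comm, iterate_add_apply, hf]
  exact iterate_fixed (fwdDiff_const h 0) e

lemma fwdDiff_iter_comp_natCast {R : Type*} [AddCommMonoidWithOne R] (f : R → G) (k y : ℕ) :
    (Δ_[1])^[k] (fun m : ℕ ↦ f m) y = (Δ_[1])^[k] f y := by
  simp [fwdDiff_iter_eq_sum_shift]

lemma fwdDiff_iter_apply_zero_eq_sum {R : Type*} [CommRing R] (f : ℕ → R) (k : ℕ) :
    (Δ_[1])^[k] f 0 = ∑ s ∈ range (k + 1), (k.choose s : R) * (-1) ^ s * f (k - s) := by
  rw [fwdDiff_iter_eq_sum_shift, ← sum_range_reflect]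
  refine sum_congr rfl fun s hs ↦ ?_
  have hs : s ≤ k := Nat.lt_succ_iff.mp (mem_range.mp hs)
  rw [Nat.add_sub_cancel, Nat.choose_symm hs, Nat.sub_sub_self hs, zsmul_eq_mul]
  push_cast
  simp only [zero_add, smul_eq_mul, mul_one]
  ring

end ForwardDifference

section EulerTransform

variable {𝕜 : Type*} [NormedField 𝕜] {r : 𝕜}

lemma hasSum_choose_mul_geometric (k : ℕ) (hr : ‖r‖ < 1) :
    HasSum (fun m ↦ (m.choose k : 𝕜) * r ^ m) (r ^ k / (1 - r) ^ (k + 1)) := by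
  have hshift := (hasSum_choose_mul_geometric_of_norm_lt_one k hr).mul_left (r ^ k)
  rw [← hasSum_nat_add_iff' k, sum_eq_zero fun i hi ↦ by
    rw [Nat.choose_eq_zero_of_lt (mem_range.mp hi), Nat.cast_zero, zero_mul], sub_zero,
    div_eq_mul_one_div]
  exact hshift.congr_fun fun m ↦ by rw [pow_add]; ring

lemma hasSum_geometric_mul_of_fwdDiff_iter_eq_zero {f : ℕ → 𝕜} {d : ℕ}
    (hf : (Δ_[1])^[d + 1] f = 0) (hr : ‖r‖ < 1) :
    HasSum (fun m ↦ r ^ m * f m)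
      (∑ k ∈ range (d + 1), r ^ k / (1 - r) ^ (k + 1) * (Δ_[1])^[k] f 0) := by
  have hnewton : ∀ m, f m = ∑ k ∈ range (d + 1), (m.choose k : 𝕜) * (Δ_[1])^[k] f 0 := by
    intro m
    calc f m = ∑ k ∈ range (m + 1), (m.choose k : 𝕜) * (Δ_[1])^[k] f 0 := by
          simpa using shift_eq_sum_fwdDiff_iter 1 f m 0
      _ = ∑ k ∈ range (m + d + 1), (m.choose k : 𝕜) * (Δ_[1])^[k] f 0 :=
          sum_subset (range_subset_range.mpr (by omega)) fun k _ hk ↦ by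
            rw [Nat.choose_eq_zero_of_lt (by simpa using hk), Nat.cast_zero, zero_mul]
      _ = ∑ k ∈ range (d + 1), (m.choose k : 𝕜) * (Δ_[1])^[k] f 0 :=
          (sum_subset (range_subset_range.mpr (by omega)) fun k _ hk ↦ by
            rw [fwdDiff_iter_eq_zero_of_le hf (by simpa using hk), Pi.zero_apply, mul_zero]).symm
  simp_rw [hnewton, mul_sum]
  exact hasSum_sum fun k _ ↦
    ((hasSum_choose_mul_geometric k hr).mul_right _).congr_fun fun m ↦ by ring

end EulerTransform

lemma hasSum_half_pow_succ_mul_of_fwdDiff_iter_eq_zero {f : ℕ → ℝ} {d : ℕ}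
    (hf : (Δ_[1])^[d + 1] f = 0) :
    HasSum (fun m ↦ (1 / 2 : ℝ) ^ (m + 1) * f m)
      (∑ k ∈ range (d + 1), (Δ_[1])^[k] f 0) := by
  have hsum := (hasSum_geometric_mul_of_fwdDiff_iter_eq_zero hf
    (r := (1 / 2 : ℝ)) (by norm_num)).mul_left (1 / 2)
  have hweights : ∑ k ∈ range (d + 1), (Δ_[1])^[k] f 0
      = 1 / 2 * ∑ k ∈ range (d + 1),
          (1 / 2 : ℝ) ^ k / (1 - 1 / 2) ^ (k + 1) * (Δ_[1])^[k] f 0 := by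
    rw [mul_sum]
    refine sum_congr rfl fun k _ ↦ ?_
    rw [pow_succ]
    field_simp
    norm_num
  rw [hweights]
  exact hsum.congr_fun fun m ↦ by rw [pow_succ]; ring

lemma Nat.sum_range_add_sub_one_choose (j u : ℕ) :
    ∑ t ∈ range (u + 1), (j + t - 1).choose t = (j + u).choose u := by
  induction u with
  | zero => simp
  | succ u ih =>
    rw [sum_range_succ, ih, show j + (u + 1) - 1 = j + u by omega, ← add_assoc,
      Nat.choose_succ_succ]

lemma Nat.add_sub_one_choose_mul_pow_le (r j n s : ℕ) :
    (j + s - 1).choose s * (r + s) ^ n ≤ (s + (j + r)) ^ (j + n) := by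
  rw [pow_add]
  gcongr ?_ * ?_
  · calc (j + s - 1).choose s ≤ (j + s).choose j := by
          rw [Nat.choose_symm_add]; exact Nat.choose_le_choose s (Nat.sub_le _ _)
      _ ≤ (j + s) ^ j := Nat.choose_le_pow _ _
      _ ≤ (s + (j + r)) ^ j := Nat.pow_le_pow_left (by omega) _
  · exact Nat.pow_le_pow_left (by omega) _

lemma summable_natCast_add_pow_mul_geometric {R : Type*} [NormedCommRing R]
    [HasSummableGeomSeries R] (c : R) (d : ℕ) {x : R} (hx : ‖x‖ < 1) :
    Summable fun s : ℕ ↦ ((s : R) + c) ^ d * x ^ s := by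
  have hsum : Summable fun s : ℕ ↦
      ∑ i ∈ range (d + 1), c ^ (d - i) * d.choose i * ((s : R) ^ i * x ^ s) :=
    summable_sum fun i _ ↦ (summable_pow_mul_geometric_of_norm_lt_one i hx).mul_left _
  refine hsum.congr fun s ↦ ?_
  rw [add_pow, sum_mul]
  exact sum_congr rfl fun i _ ↦ by ring

lemma summable_p_summand (r j n : ℕ) :
    Summable fun s : ℕ ↦
      ((j + s - 1).choose s : ℝ) * ((r + s : ℕ) : ℝ) ^ n / 2 ^ (j + s) := by
  refine .of_nonneg_of_le (fun s ↦ by positivity) (fun s ↦ ?_)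
    (summable_natCast_add_pow_mul_geometric (j + r : ℝ) (j + n) (x := 1 / 2) (by norm_num))
  have hle : ((j + s - 1).choose s : ℝ) * ((r + s : ℕ) : ℝ) ^ n
      ≤ ((s : ℝ) + (j + r)) ^ (j + n) := by
    exact_mod_cast Nat.add_sub_one_choose_mul_pow_le r j n s
  calc ((j + s - 1).choose s : ℝ) * ((r + s : ℕ) : ℝ) ^ n / 2 ^ (j + s)
      ≤ ((s : ℝ) + (j + r)) ^ (j + n) / 2 ^ s := by
        gcongr
        · norm_num
        · omega
    _ = ((s : ℝ) + (j + r)) ^ (j + n) * (1 / 2) ^ s := by rw [one_div_pow, div_eq_mul_one_div]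

lemma tsum_tsum_eq_tsum_sum_antidiagonal_of_nonneg {F : ℕ × ℕ → ℝ} (hF : 0 ≤ F)
    (hsum : Summable fun u ↦ ∑ x ∈ HasAntidiagonal.antidiagonal u, F x) :
    ∑' m, ∑' t, F (m, t) = ∑' u, ∑ x ∈ HasAntidiagonal.antidiagonal u, F x := by
  have hsigma : Summable fun x : Σ u, HasAntidiagonal.antidiagonal u ↦ F x.2 :=
    (summable_sigma_of_nonneg fun _ ↦ hF _).2
      ⟨fun _ ↦ (hasSum_fintype _).summable,
        hsum.congr fun u ↦ (Finset.tsum_subtype _ F).symm⟩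
  have hprod : Summable F := HasAntidiagonal.sigmaAntidiagonalEquivProd.summable_iff.1 hsigma
  rw [← hprod.tsum_prod, ← HasAntidiagonal.sigmaAntidiagonalEquivProd.tsum_eq]
  exact (hsigma.tsum_sigma).trans (tsum_congr fun u ↦ Finset.tsum_subtype _ F)

lemma p_succ_eq_tsum (r j n : ℕ) :
    p r (j + 1) n = ∑' m, (1 / 2 : ℝ) ^ (m + 1) * p (r + m) j n := by
  set F : ℕ × ℕ → ℝ := fun x ↦ (1 / 2 : ℝ) ^ (x.1 + 1) *
    (((j + x.2 - 1).choose x.2 : ℝ) * ((r + x.1 + x.2 : ℕ) : ℝ) ^ n / 2 ^ (j + x.2))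
  have hfiber : ∀ u, ∑ x ∈ HasAntidiagonal.antidiagonal u, F x
      = ((j + 1 + u - 1).choose u : ℝ) * ((r + u : ℕ) : ℝ) ^ n / 2 ^ (j + 1 + u) := by
    intro u
    have hterm : ∀ x ∈ HasAntidiagonal.antidiagonal u, F x
        = ((j + x.2 - 1).choose x.2 : ℝ) * (((r + u : ℕ) : ℝ) ^ n / 2 ^ (j + 1 + u)) := by
      rintro ⟨m, t⟩ hmt
      rw [HasAntidiagonal.mem_antidiagonal] at hmt
      subst hmt
      simp only [F, add_assoc, pow_add, one_div_pow]
      field_simp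
    rw [sum_congr rfl hterm, ← sum_mul, ← Nat.sum_antidiagonal_swap]
    simp only [Prod.snd_swap]
    rw [Nat.sum_antidiagonal_eq_sum_range_succ_mk, ← Nat.cast_sum,
      Nat.sum_range_add_sub_one_choose, show j + 1 + u - 1 = j + u by omega, mul_div_assoc]
  calc p r (j + 1) n = ∑' u, ∑ x ∈ HasAntidiagonal.antidiagonal u, F x :=
        tsum_congr fun u ↦ (hfiber u).symm
    _ = ∑' m, ∑' t, F (m, t) := by
        refine (tsum_tsum_eq_tsum_sum_antidiagonal_of_nonneg (fun x ↦ by positivity) ?_).symm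
        simpa only [hfiber] using summable_p_summand r (j + 1) n
    _ = ∑' m, (1 / 2 : ℝ) ^ (m + 1) * p (r + m) j n :=
        tsum_congr fun m ↦ by rw [p, ← tsum_mul_left]

lemma p_add_eq_sum (r m j n : ℕ) :
    p (r + m) j n = ∑ i ∈ range (n + 1), n.choose i * p r j (n - i) * (m : ℝ) ^ i := by
  simp only [p, ← tsum_mul_left, ← tsum_mul_right]
  rw [← Summable.tsum_finsetSum fun i _ ↦
    ((summable_p_summand r j (n - i)).mul_left _).mul_right _]
  refine tsum_congr fun s ↦ ?_
  rw [show ((r + m + s : ℕ) : ℝ) = m + ((r + s : ℕ) : ℝ) by push_cast; ring, add_pow,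
    mul_sum, sum_div]
  exact sum_congr rfl fun i _ ↦ by ring

lemma fwdDiff_iter_p_add_eq_zero (r j n : ℕ) :
    (Δ_[1])^[n + 1] (fun m : ℕ ↦ p (r + m) j n) = 0 := by
  funext y
  simp only [p_add_eq_sum]
  rw [fwdDiff_iter_comp_natCast
    (fun x : ℝ ↦ ∑ i ∈ range (n + 1), n.choose i * p r j (n - i) * x ^ i),
    fwdDiff_iter_sum_mul_pow_eq_zero]
  rfl

theorem stmt3_general (r j n : ℕ) (hj : 1 ≤ j) :
    Summable (fun k : ℕ =>
      ∑ s ∈ Finset.range (k + 1), (k.choose s : ℝ) * (-1) ^ s * p (r + k - s) (j - 1) n) ∧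
    p r j n = ∑' k : ℕ,
      ∑ s ∈ Finset.range (k + 1), (k.choose s : ℝ) * (-1) ^ s * p (r + k - s) (j - 1) n := by
  obtain ⟨j, rfl⟩ := Nat.exists_eq_add_of_le' hj
  simp only [Nat.add_sub_cancel]
  set q : ℕ → ℝ := fun m ↦ p (r + m) j n
  have hterm : ∀ k, ∑ s ∈ range (k + 1), (k.choose s : ℝ) * (-1) ^ s * p (r + k - s) j n
      = (Δ_[1])^[k] q 0 := fun k ↦ by
    rw [fwdDiff_iter_apply_zero_eq_sum]
    refine sum_congr rfl fun s hs ↦ ?_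
    rw [Nat.add_sub_assoc (Nat.lt_succ_iff.mp (mem_range.mp hs))]
  have hq : (Δ_[1])^[n + 1] q = 0 := fwdDiff_iter_p_add_eq_zero r j n
  have hvanish : ∀ k ∉ range (n + 1), (Δ_[1])^[k] q 0 = 0 := fun k hk ↦ by
    rw [fwdDiff_iter_eq_zero_of_le hq (by simpa using hk), Pi.zero_apply]
  simp only [hterm]
  refine ⟨summable_of_ne_finset_zero hvanish, ?_⟩
  rw [tsum_eq_sum hvanish, p_succ_eq_tsum]
  exact (hasSum_half_pow_succ_mul_of_fwdDiff_iter_eq_zero hq).tsum_eq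

theorem stmt3 (r j n : ℕ) (hj : 1 ≤ j) (hn : 1 ≤ n) :
    Summable (fun k : ℕ =>
      ∑ s ∈ Finset.range (k + 1), (k.choose s : ℝ) * (-1) ^ s * p (r + k - s) (j - 1) n) ∧
    p r j n = ∑' k : ℕ,
      ∑ s ∈ Finset.range (k + 1), (k.choose s : ℝ) * (-1) ^ s * p (r + k - s) (j - 1) n :=
  stmt3_general r j n hj
end

section
/- For all j ≥ 1 and n, r ≥ 0, p^r_j(n) = (1/2) Σ_{s=0}^{∞} p^{r+s}_{j−1}(n) / 2^s, where the sum converges. -/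
/-! Expanding each `p (r + s) j n` as its series turns the right-hand side into a nonnegative
double series over `(s, t)` whose term depends on `s + t = k` only through the weight
`j.multichoose t`. Grouping by `k` (legitimate since all terms are nonnegative), the hockey-stick
identity `∑_{t ≤ k} j.multichoose t = (j + 1).multichoose k` yields the `k`-th term of
`p r (j + 1) n`. -/

open Finset

noncomputable def pTerm (r j n s : ℕ) : ℝ :=
  ((j + s - 1).choose s : ℝ) * ((r + s : ℕ) : ℝ) ^ n / 2 ^ (j + s)

lemma pTerm_nonneg (r j n s : ℕ) : 0 ≤ pTerm r j n s := by
  unfold pTerm; positivity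

lemma Nat.sum_antidiagonal_multichoose (j k : ℕ) :
    ∑ q ∈ antidiagonal k, j.multichoose q.2 = (j + 1).multichoose k := by
  induction k with
  | zero => simp
  | succ k ih => rw [Nat.sum_antidiagonal_succ, ih, Nat.multichoose_succ_succ, add_comm]

lemma Nat.choose_pred_add_mul_pow_le (r j n s : ℕ) :
    (j + s - 1).choose s * (r + s) ^ n ≤ (j + r + s) ^ (j + n) := by
  have hchoose : (j + s - 1).choose s ≤ (j + s) ^ j :=
    calc (j + s - 1).choose s ≤ (j + s).choose s := Nat.choose_le_choose s (by omega)
      _ = (j + s).choose j := Nat.choose_symm_add.symm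
      _ ≤ (j + s) ^ j := Nat.choose_le_pow _ _
  rw [pow_add]
  exact Nat.mul_le_mul (hchoose.trans (by gcongr; omega)) (by gcongr; omega)

lemma summable_cast_add_pow_div_two_pow (c m : ℕ) :
    Summable (fun s : ℕ => ((c + s : ℕ) : ℝ) ^ m / 2 ^ s) := by
  have h := (summable_nat_add_iff c).2
    (summable_pow_mul_geometric_of_norm_lt_one m (r := (2⁻¹ : ℝ)) (by norm_num))
  refine (h.mul_left (2 ^ c)).congr fun s => ?_
  rw [add_comm s c, inv_pow, pow_add]
  field_simp

lemma summable_pTerm (r j n : ℕ) : Summable (pTerm r j n) := by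
  refine (summable_cast_add_pow_div_two_pow (j + r) (j + n)).of_nonneg_of_le
    (pTerm_nonneg r j n) fun s => ?_
  unfold pTerm
  rw [← Nat.cast_pow, ← Nat.cast_mul, add_assoc]
  gcongr
  · exact_mod_cast (add_assoc j r s ▸ Nat.choose_pred_add_mul_pow_le r j n s)
  · norm_num
  · omega

lemma hasSum_pTerm (r j n : ℕ) : HasSum (pTerm r j n) (p r j n) :=
  (summable_pTerm r j n).hasSum

lemma sum_antidiagonal_pTerm_div_two_pow (r j n k : ℕ) :
    ∑ q ∈ antidiagonal k, pTerm (r + q.1) j n q.2 / 2 ^ (q.1 + 1) = pTerm r (j + 1) n k := by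
  have hterm : ∀ q ∈ antidiagonal k, pTerm (r + q.1) j n q.2 / 2 ^ (q.1 + 1)
      = (j.multichoose q.2 : ℝ) * (((r + k : ℕ) : ℝ) ^ n / 2 ^ (j + 1 + k)) := by
    intro q hq
    rw [HasAntidiagonal.mem_antidiagonal] at hq
    rw [pTerm, Nat.multichoose_eq, div_div, ← pow_add, mul_div_assoc,
      show r + q.1 + q.2 = r + k by omega, show j + q.2 + (q.1 + 1) = j + 1 + k by omega]
  rw [sum_congr rfl hterm, ← sum_mul, ← Nat.cast_sum, Nat.sum_antidiagonal_multichoose,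
    Nat.multichoose_eq, pTerm, mul_div_assoc]

theorem HasSum.of_sum_antidiagonal_of_nonneg {A : Type*} [AddCommMonoid A] [HasAntidiagonal A]
    {f : A × A → ℝ} (hf : 0 ≤ f) {a : ℝ} (h : HasSum (fun k => ∑ q ∈ antidiagonal k, f q) a) :
    HasSum f a := by
  rw [← HasAntidiagonal.sigmaAntidiagonalEquivProd.hasSum_iff]
  have hfiber : ∀ k, HasSum (fun q : antidiagonal k => f q) (∑ q ∈ antidiagonal k, f q) :=
    fun k => sum_coe_sort (antidiagonal k) f ▸ hasSum_fintype _
  have hsum : Summable (f ∘ HasAntidiagonal.sigmaAntidiagonalEquivProd) :=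
    (summable_sigma_of_nonneg fun _ => hf _).2
      ⟨fun k => (hfiber k).summable, h.summable.congr fun k => (hfiber k).tsum_eq.symm⟩
  exact (hsum.hasSum.sigma hfiber).unique h ▸ hsum.hasSum

lemma hasSum_p_div_two_pow_succ (r j n : ℕ) :
    HasSum (fun s => p (r + s) j n / 2 ^ (s + 1)) (p r (j + 1) n) := by
  have hdouble : HasSum (fun q : ℕ × ℕ => pTerm (r + q.1) j n q.2 / 2 ^ (q.1 + 1))
      (p r (j + 1) n) :=
    .of_sum_antidiagonal_of_nonneg (fun q => div_nonneg (pTerm_nonneg ..) (by positivity))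
      (by simpa only [sum_antidiagonal_pTerm_div_two_pow] using hasSum_pTerm r (j + 1) n)
  exact hdouble.prod_fiberwise fun s => (hasSum_pTerm (r + s) j n).div_const _

theorem stmt5 (r j n : ℕ) (hj : 1 ≤ j) :
    Summable (fun s : ℕ => p (r + s) (j - 1) n / 2 ^ s) ∧
    p r j n = (1 / 2) * ∑' s : ℕ, p (r + s) (j - 1) n / 2 ^ s := by
  obtain ⟨j, rfl⟩ := Nat.exists_eq_add_of_le' hj
  have h : HasSum (fun s => p (r + s) j n / 2 ^ s) (2 * p r (j + 1) n) :=
    ((hasSum_p_div_two_pow_succ r j n).mul_left 2).congr_fun fun s => by ring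
  exact ⟨h.summable, by rw [Nat.add_sub_cancel, h.tsum_eq]; ring⟩
end

section
/- For all j ≥ 1, n ≥ 1, and r ≥ 0, p^r_j(n) = p^r_{j−1}(n) + Σ_{s=0}^{n−1} C(n,s) p^r_j(s). -/
/-!
Expanding `(r + s + 1)^n` binomially under the series shows that
`∑_{k<n} C(n,k) p^r_j(k) = p^{r+1}_j(n) - p^r_j(n)`. Pascal's rule
`C(j+s+1, s+1) = C(j+s, s) + C(j+s, s+1)`, applied under the series after shifting the
summation index, gives `p^{r+1}_{j+1}(n) = 2 p^r_{j+1}(n) - p^r_j(n)`. Combining the two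
identities yields the recurrence.
-/

noncomputable def pSummand (r j n s : ℕ) : ℝ :=
  ((j + s - 1).choose s : ℝ) * ((r + s : ℕ) : ℝ) ^ n / 2 ^ (j + s)

lemma p_eq_tsum_pSummand (r j n : ℕ) : p r j n = ∑' s, pSummand r j n s := rfl

lemma choose_add_sub_one_le_pow (j s : ℕ) : (j + s - 1).choose s ≤ (j + s) ^ j :=
  calc (j + s - 1).choose s ≤ (s + j).choose s := Nat.choose_le_choose s (by omega)
    _ = (s + j).choose j := Nat.choose_symm_add
    _ ≤ (j + s) ^ j := by rw [add_comm]; exact Nat.choose_le_pow _ _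

lemma summable_pow_add_mul_inv_two_pow (c k : ℕ) :
    Summable fun s : ℕ => ((s + c : ℕ) : ℝ) ^ k * (2⁻¹ : ℝ) ^ s := by
  have hgeom := (summable_nat_add_iff c).2 <|
    summable_pow_mul_geometric_of_norm_lt_one (R := ℝ) k (r := 2⁻¹) (by norm_num)
  refine (hgeom.mul_left (2 ^ c)).congr fun s => ?_
  simp only [pow_add, inv_pow]
  field_simp

lemma summable_pSummand (r j n : ℕ) : Summable (pSummand r j n) := by
  refine Summable.of_nonneg_of_le (fun s => by unfold pSummand; positivity) (fun s => ?_)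
    (summable_pow_add_mul_inv_two_pow (j + r) (j + n))
  have hle : ∀ m k, m ≤ s + (j + r) →
      ((m : ℕ) : ℝ) ^ k ≤ ((s + (j + r) : ℕ) : ℝ) ^ k :=
    fun m k hm => pow_le_pow_left₀ m.cast_nonneg (Nat.cast_le.2 hm) _
  have hchoose : ((j + s - 1).choose s : ℝ) ≤ ((s + (j + r) : ℕ) : ℝ) ^ j :=
    calc ((j + s - 1).choose s : ℝ) ≤ ((j + s : ℕ) : ℝ) ^ j := by
          exact_mod_cast choose_add_sub_one_le_pow j s
      _ ≤ ((s + (j + r) : ℕ) : ℝ) ^ j := hle _ _ (by omega)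
  have hbase : ((r + s : ℕ) : ℝ) ^ n ≤ ((s + (j + r) : ℕ) : ℝ) ^ n := hle _ _ (by omega)
  calc pSummand r j n s
      ≤ ((s + (j + r) : ℕ) : ℝ) ^ j * ((s + (j + r) : ℕ) : ℝ) ^ n / 2 ^ s := by
        unfold pSummand
        gcongr
        · norm_num
        · omega
    _ = ((s + (j + r) : ℕ) : ℝ) ^ (j + n) * (2⁻¹ : ℝ) ^ s := by
        rw [pow_add, inv_pow, div_eq_mul_inv]

lemma sum_range_choose_mul_pow {R : Type*} [CommRing R] (x : R) (n : ℕ) :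
    ∑ k ∈ Finset.range n, (n.choose k : R) * x ^ k = (x + 1) ^ n - x ^ n := by
  have h := add_pow x 1 n
  simp only [one_pow, mul_one, Finset.sum_range_succ, Nat.choose_self, Nat.cast_one] at h
  rw [h, add_sub_cancel_right]
  exact Finset.sum_congr rfl fun k _ => mul_comm _ _

lemma sum_choose_mul_pSummand (r j n s : ℕ) :
    ∑ k ∈ Finset.range n, (n.choose k : ℝ) * pSummand r j k s =
      pSummand (r + 1) j n s - pSummand r j n s := by
  have hsum := sum_range_choose_mul_pow ((r + s : ℕ) : ℝ) n
  simp only [pSummand, mul_div_assoc', ← Finset.sum_div,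
    mul_left_comm _ ((j + s - 1).choose s : ℝ), ← Finset.mul_sum, hsum]
  push_cast
  ring

lemma sum_choose_mul_p (r j n : ℕ) :
    ∑ k ∈ Finset.range n, (n.choose k : ℝ) * p r j k = p (r + 1) j n - p r j n := by
  simp only [p_eq_tsum_pSummand, ← tsum_mul_left]
  rw [← Summable.tsum_finsetSum fun k _ => (summable_pSummand r j k).mul_left _,
    ← (summable_pSummand (r + 1) j n).tsum_sub (summable_pSummand r j n)]
  exact tsum_congr (sum_choose_mul_pSummand r j n)

lemma two_mul_pSummand_succ_zero (r j n : ℕ) :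
    2 * pSummand r (j + 1) n 0 = pSummand r j n 0 := by
  simp only [pSummand, add_zero, add_tsub_cancel_right, Nat.choose_zero_right, pow_succ]
  field_simp

lemma pSummand_succ_succ (r j n s : ℕ) :
    pSummand (r + 1) (j + 1) n s = 2 * pSummand r (j + 1) n (s + 1) - pSummand r j n (s + 1) := by
  have hpascal :
      ((j + s + 1).choose (s + 1) : ℝ) = (j + s).choose s + (j + s).choose (s + 1) := by
    exact_mod_cast Nat.choose_succ_succ (j + s) s
  simp only [pSummand, show j + 1 + s - 1 = j + s by omega,
    show j + 1 + (s + 1) - 1 = j + s + 1 by omega, hpascal]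
  rw [show j + (s + 1) - 1 = j + s by omega, show r + (s + 1) = r + 1 + s by omega]
  ring

lemma p_succ_succ (r j n : ℕ) : p (r + 1) (j + 1) n = 2 * p r (j + 1) n - p r j n := by
  set g : ℕ → ℝ := fun s => 2 * pSummand r (j + 1) n s - pSummand r j n s
  have hg : Summable g :=
    ((summable_pSummand r (j + 1) n).mul_left 2).sub (summable_pSummand r j n)
  calc p (r + 1) (j + 1) n = ∑' s, g (s + 1) := tsum_congr (pSummand_succ_succ r j n)
    _ = ∑' s, g s := by
        rw [hg.tsum_eq_zero_add, show g 0 = 0 from sub_eq_zero.2 (two_mul_pSummand_succ_zero r j n),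
          zero_add]
    _ = 2 * p r (j + 1) n - p r j n := by
        rw [(summable_pSummand r (j + 1) n |>.mul_left 2).tsum_sub (summable_pSummand r j n),
          tsum_mul_left]
        rfl

theorem stmt6_general (r j n : ℕ) (hj : 1 ≤ j) :
    p r j n = p r (j - 1) n + ∑ s ∈ Finset.range n, (n.choose s : ℝ) * p r j s := by
  obtain ⟨j, rfl⟩ : ∃ k, j = k + 1 := ⟨j - 1, by omega⟩
  rw [sum_choose_mul_p, p_succ_succ, add_tsub_cancel_right]
  ring

theorem stmt6 (r j n : ℕ) (hj : 1 ≤ j) (hn : 1 ≤ n) :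
    p r j n = p r (j - 1) n + ∑ s ∈ Finset.range n, (n.choose s : ℝ) * p r j s :=
  stmt6_general r j n hj
end

section
/- For all n ≥ 0, p^2_1(n) = 2 Σ_{s=2}^{∞} s^n / 2^s. -/
/-- `p^2_1(n) = 2 \sum_{s=2}^\infty s^n / 2^s` (reindexed with `s = t + 2`). -/
theorem stmt9 (n : ℕ) : p 2 1 n = 2 * ∑' t : ℕ, ((t : ℝ) + 2) ^ n / 2 ^ (t + 2) := by
  rw [p, ← tsum_mul_left]
  refine tsum_congr fun s => ?_
  have h : (1 + s - 1).choose s = 1 := by simp [Nat.add_sub_cancel_left]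
  rw [h]
  push_cast
  ring
end

section
/- For all n ≥ 1 and integers r ≥ 3, with B^{−2}_s = 2·3^s − 2^s, one has p^3_1(n) = Σ_{s=1}^{n} C(n,s) (−1)^{s+1} B^{−2}_s · p^3_1(n−s). -/
open Finset

theorem sum_Icc_one_choose_mul_neg_pow {R : Type*} [CommRing R] (a y : R) (n : ℕ) :
    ∑ s ∈ Icc 1 n, (n.choose s : R) * (-a) ^ s * y ^ (n - s) = (y - a) ^ n - y ^ n := by
  rw [show y - a = -a + y by ring, add_pow, Nat.range_succ_eq_Icc_zero,
    ← insert_Icc_add_one_left_eq_Icc n.zero_le, sum_insert (by simp)]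
  simp only [pow_zero, Nat.choose_zero_right, Nat.cast_one, Nat.sub_zero, one_mul, mul_one]
  rw [add_sub_cancel_left]
  exact sum_congr rfl fun s _ => by ring

theorem sum_Icc_choose_mul_polyBernoulli_neg_two {R : Type*} [CommRing R] (x : R) (n : ℕ) :
    ∑ s ∈ Icc 1 n, (n.choose s : R) * (-1) ^ (s + 1) * (2 * 3 ^ s - 2 ^ s) * (x + 3) ^ (n - s)
      = (x + 3) ^ n + (x + 1) ^ n - 2 * x ^ n := by
  calc _ = ∑ s ∈ Icc 1 n, ((n.choose s : R) * (-2) ^ s * (x + 3) ^ (n - s)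
          - 2 * ((n.choose s : R) * (-3) ^ s * (x + 3) ^ (n - s))) :=
        sum_congr rfl fun s _ => by rw [neg_pow (2 : R), neg_pow (3 : R)]; ring
    _ = ((x + 3 - 2) ^ n - (x + 3) ^ n) - 2 * ((x + 3 - 3) ^ n - (x + 3) ^ n) := by
        rw [sum_sub_distrib, ← mul_sum, sum_Icc_one_choose_mul_neg_pow,
          sum_Icc_one_choose_mul_neg_pow]
    _ = _ := by ring

theorem summable_add_pow_div_two_pow (a : ℝ) (m : ℕ) :
    Summable fun k : ℕ => ((k : ℝ) + a) ^ m / 2 ^ (k + 1) := by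
  have hmonomial (i : ℕ) :
      Summable fun k : ℕ => (k : ℝ) ^ i * a ^ (m - i) * m.choose i / 2 ^ (k + 1) :=
    ((summable_pow_mul_geometric_of_norm_lt_one i (r := (1 / 2 : ℝ)) (by norm_num)).mul_right
      (a ^ (m - i) * m.choose i / 2)).congr fun k => by rw [one_div_pow, pow_succ]; field_simp
  exact (summable_sum fun i _ => hmonomial i).congr fun k => by rw [add_pow, sum_div]

theorem tsum_add_one_pow_div_two_pow {n : ℕ} (hn : n ≠ 0) :
    ∑' k : ℕ, ((k : ℝ) + 1) ^ n / 2 ^ (k + 1) = 2 * ∑' k : ℕ, (k : ℝ) ^ n / 2 ^ (k + 1) := by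
  have hg := summable_pow_mul_geometric_of_norm_lt_one n (r := (1 / 2 : ℝ)) (by norm_num)
  calc ∑' k : ℕ, ((k : ℝ) + 1) ^ n / 2 ^ (k + 1)
      = ∑' k : ℕ, (k : ℝ) ^ n * (1 / 2) ^ k := by
        rw [hg.tsum_eq_zero_add]
        simp [zero_pow hn, div_eq_mul_inv]
    _ = 2 * ∑' k : ℕ, (k : ℝ) ^ n / 2 ^ (k + 1) := by
        rw [← tsum_mul_left]
        exact tsum_congr fun k => by rw [one_div_pow, pow_succ]; field_simp

theorem p_three_one_eq_tsum (m : ℕ) : p 3 1 m = ∑' k : ℕ, ((k : ℝ) + 3) ^ m / 2 ^ (k + 1) :=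
  tsum_congr fun k => by simp [add_comm]

/-- `B^{-2}_s = 2·3^s - 2^s` is the poly-Bernoulli number of index `-2`. -/
theorem stmt11 (n : ℕ) (hn : 1 ≤ n) :
    p 3 1 n = ∑ s ∈ Finset.Icc 1 n,
      (n.choose s : ℝ) * (-1) ^ (s + 1) * (2 * 3 ^ s - 2 ^ s) * p 3 1 (n - s) := by
  have h3 := summable_add_pow_div_two_pow 3 n
  have h1 := summable_add_pow_div_two_pow 1 n
  have h0 : Summable fun k : ℕ => (k : ℝ) ^ n / 2 ^ (k + 1) := by
    simpa using summable_add_pow_div_two_pow 0 n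
  calc p 3 1 n
      = ∑' k : ℕ, (((k : ℝ) + 3) ^ n / 2 ^ (k + 1)
          + (((k : ℝ) + 1) ^ n / 2 ^ (k + 1) - 2 * ((k : ℝ) ^ n / 2 ^ (k + 1)))) := by
        rw [h3.tsum_add (h1.sub (h0.mul_left 2)), h1.tsum_sub (h0.mul_left 2), tsum_mul_left,
          tsum_add_one_pow_div_two_pow (Nat.one_le_iff_ne_zero.mp hn), sub_self, add_zero,
          p_three_one_eq_tsum]
    _ = ∑' k : ℕ, ∑ s ∈ Icc 1 n, (n.choose s : ℝ) * (-1) ^ (s + 1) * (2 * 3 ^ s - 2 ^ s)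
          * (((k : ℝ) + 3) ^ (n - s) / 2 ^ (k + 1)) := by
        refine tsum_congr fun k => ?_
        simp only [← mul_div_assoc, ← sum_div, sum_Icc_choose_mul_polyBernoulli_neg_two]
        ring
    _ = _ := by
        simp only [p_three_one_eq_tsum, ← tsum_mul_left]
        exact Summable.tsum_finsetSum fun s _ =>
          (summable_add_pow_div_two_pow 3 (n - s)).mul_left _
end

section
/- For every integer b ≥ 0 and all n ≥ 0, the multi-poly-Bernoulli number B^{(−2,0,...,0)}_n with b trailing zeros equals 2·(3+b)^n − (2+b)^n. -/
/-- `chain b t = \sum_{0<s_1<\dots<s_b<t} s_1^2` (for `b = 0` just `t^2`): the weight of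
strictly increasing chains of length `b+1` with top element `t`, coming from the
multiple polylogarithm `Li_{-2,0,\dots,0}(x) = \sum_{0<s_1<\dots<s_{b+1}} s_1^2 x^{s_{b+1}}`. -/
def chain : ℕ → ℕ → ℕ
  | 0, t => t ^ 2
  | b + 1, t => ∑ s ∈ Finset.range t, chain b s

/-- The multi-poly-Bernoulli number `B^{(-2,0,...,0)}_n` (with `b` trailing zeros), defined by
`\sum_n B_n m^n/n! = Li_{-2,0,\dots,0}(1-e^{-m})/(1-e^{-m})^{b+1}
 = \sum_t chain b t · (1-e^{-m})^{t-(b+1)}`; extracting the coefficient of `m^n/n!` of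
`(1-e^{-m})^{t-(b+1)} = \sum_i C(t-(b+1),i)(-1)^i e^{-im}` term by term gives this
(finitely supported, hence convergent) series. -/
noncomputable def multiPolyBernoulli (b n : ℕ) : ℝ :=
  ∑' t : ℕ, (chain b t : ℝ) *
    ∑ i ∈ Finset.range (t - (b + 1) + 1),
      ((t - (b + 1)).choose i : ℝ) * (-1) ^ i * (-(i : ℝ)) ^ n

/-!
For `g x = (-x) ^ n`, the inner sum over `i` in `multiPolyBernoulli b n` is `(-1) ^ M Δ^M g 0`
with `M = t - (b + 1)`; it vanishes for `M > n`, so the series is a finite sum. Since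
`chain b (b + 1 + m) = 2 · multichoose (b + 3) m - multichoose (b + 2) m`, that sum combines two
backward Gregory–Newton expansions `g (-s) = ∑ₘ (-1) ^ m multichoose s m Δ^m g 0`, at `s = b + 3`
and `s = b + 2`, which give `2 (b + 3) ^ n - (b + 2) ^ n`.
-/

open Finset fwdDiff Function

theorem shift_sub_eq_sum_fwdDiff_iter {M G : Type*} [AddCommGroup M] [AddCommGroup G]
    {h : M} {f : M → G} {N : ℕ} (hf : (Δ_[h])^[N] f = 0) (s : ℕ) (y : M) :
    f (y - s • h) = ∑ m ∈ range N, ((-1 : ℤ) ^ m * s.multichoose m) • (Δ_[h])^[m] f y := by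
  induction N generalizing f s with
  | zero => simp [show f = 0 from hf]
  | succ N ih =>
    have hΔ : (Δ_[h])^[N] (Δ_[h] f) = 0 := by rwa [← iterate_succ_apply]
    induction s with
    | zero => simp [sum_range_succ', Nat.multichoose_zero_succ]
    | succ s ihs =>
      have step := ih hΔ (s + 1)
      rw [sum_range_succ'] at ihs ⊢
      simp only [Nat.multichoose_succ_succ, iterate_succ_apply] at ihs ⊢
      calc f (y - (s + 1) • h) = f (y - s • h) - Δ_[h] f (y - (s + 1) • h) := by
            simp [fwdDiff, add_smul, sub_add_eq_sub_sub, sub_add_cancel]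
        _ = _ := by
            rw [ihs, step]
            simp only [Nat.cast_add, mul_add, add_smul, sum_add_distrib, pow_succ, mul_neg_one,
              neg_mul, neg_smul, sum_neg_distrib, Nat.multichoose_zero_right]
            abel

theorem fwdDiff_iter_neg_pow_eq_zero {R : Type*} [CommRing R] {n m : ℕ} (h : n < m) :
    (Δ_[1])^[m] (fun x : R ↦ (-x) ^ n) = 0 := by
  have : (fun x : R ↦ (-x) ^ n) = (-1 : R) ^ n • fun x ↦ x ^ n := by
    funext x
    rw [Pi.smul_apply, smul_eq_mul, neg_pow]
  rw [this, fwdDiff_iter_const_smul, fwdDiff_iter_pow_eq_zero_of_lt h, smul_zero]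

theorem sum_choose_mul_neg_pow_eq_fwdDiff_iter {R : Type*} [CommRing R] (M n : ℕ) :
    ∑ i ∈ range (M + 1), (M.choose i : R) * (-1) ^ i * (-(i : R)) ^ n
      = (-1) ^ M * (Δ_[1])^[M] (fun x : R ↦ (-x) ^ n) 0 := by
  rw [fwdDiff_iter_eq_sum_shift, mul_sum]
  refine sum_congr rfl fun i hi ↦ ?_
  have hiM : i ≤ M := Nat.lt_succ_iff.mp (mem_range.mp hi)
  obtain ⟨k, rfl⟩ := Nat.exists_eq_add_of_le hiM
  have hsq : ((-1 : R) ^ k) ^ 2 = 1 := by rw [← pow_mul, mul_comm, pow_mul, neg_one_sq, one_pow]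
  rw [Nat.add_sub_cancel_left, pow_add, zsmul_eq_mul, zero_add, nsmul_one]
  push_cast
  linear_combination (-((i + k).choose i : R) * (-1) ^ i * (-(i : R)) ^ n) * hsq

theorem chain_succ_right (b t : ℕ) : chain (b + 1) (t + 1) = chain (b + 1) t + chain b t :=
  sum_range_succ _ _

theorem chain_eq_choose_add_choose :
    ∀ b t : ℕ, chain b t = (t + 1).choose (b + 2) + t.choose (b + 2)
  | 0, 0 => rfl
  | 0, t + 1 => by
    have ih : t ^ 2 = (t + 1).choose 2 + t.choose 2 := chain_eq_choose_add_choose 0 t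
    show (t + 1) ^ 2 = (t + 2).choose 2 + (t + 1).choose 2
    have pascal := Nat.choose_succ_succ' t 1
    rw [Nat.choose_succ_succ' (t + 1) 1, Nat.choose_one_right]
    rw [Nat.choose_one_right] at pascal
    nlinarith [ih]
  | b + 1, 0 => by simp [chain, Nat.choose_eq_zero_of_lt]
  | b + 1, t + 1 => by
    rw [chain_succ_right, chain_eq_choose_add_choose (b + 1) t, chain_eq_choose_add_choose b t,
      Nat.choose_succ_succ' (t + 1), Nat.choose_succ_succ' t]
    ring

theorem chain_eq_zero_of_le {b t : ℕ} (h : t ≤ b) : chain b t = 0 := by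
  rw [chain_eq_choose_add_choose, Nat.choose_eq_zero_of_lt (by omega),
    Nat.choose_eq_zero_of_lt (by omega)]

theorem chain_add_multichoose (b m : ℕ) :
    chain b (b + 1 + m) + (b + 2).multichoose m = 2 * (b + 3).multichoose m := by
  rw [chain_eq_choose_add_choose, Nat.multichoose_eq, Nat.multichoose_eq,
    show b + 2 + m - 1 = (b + 1) + m by omega, show b + 3 + m - 1 = (b + 1) + m + 1 by omega,
    ← Nat.choose_symm_add, show b + 1 + m + 1 = (b + 2) + m by omega, ← Nat.choose_symm_add,
    show b + 2 + m = b + 1 + m + 1 by omega, Nat.choose_succ_succ' (b + 1 + m) (b + 1)]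
  ring

theorem multiPolyBernoulli_eq_sum_fwdDiff_iter (b n : ℕ) :
    multiPolyBernoulli b n = ∑ m ∈ range (n + 1),
      (chain b (b + 1 + m) : ℝ) * ((-1) ^ m * (Δ_[1])^[m] (fun x : ℝ ↦ (-x) ^ n) 0) := by
  unfold multiPolyBernoulli
  simp_rw [sum_choose_mul_neg_pow_eq_fwdDiff_iter]
  rw [tsum_eq_sum (s := Ico (b + 1) (b + 1 + (n + 1))), sum_Ico_eq_sum_range,
    Nat.add_sub_cancel_left]
  · simp_rw [Nat.add_sub_cancel_left]
  intro t ht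
  rcases le_or_gt t b with htb | hbt
  · rw [chain_eq_zero_of_le htb, Nat.cast_zero, zero_mul]
  · have hnt : n < t - (b + 1) := by
      simp only [mem_Ico, not_and, not_lt] at ht
      have := ht hbt
      omega
    rw [fwdDiff_iter_neg_pow_eq_zero hnt, Pi.zero_apply, mul_zero, mul_zero]

theorem stmt13 (b n : ℕ) :
    multiPolyBernoulli b n = 2 * ((3 : ℝ) + b) ^ n - ((2 : ℝ) + b) ^ n := by
  set D : ℕ → ℝ := fun m ↦ (Δ_[1])^[m] (fun x : ℝ ↦ (-x) ^ n) 0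
  have newton (s : ℕ) : (s : ℝ) ^ n = ∑ m ∈ range (n + 1), (-1) ^ m * s.multichoose m * D m := by
    simpa using
      shift_sub_eq_sum_fwdDiff_iter (fwdDiff_iter_neg_pow_eq_zero (R := ℝ) n.lt_succ_self) s 0
  have hchain (m : ℕ) :
      (chain b (b + 1 + m) : ℝ) = 2 * (b + 3).multichoose m - (b + 2).multichoose m := by
    rw [eq_sub_iff_add_eq]
    exact_mod_cast chain_add_multichoose b m
  calc multiPolyBernoulli b n
      = 2 * ∑ m ∈ range (n + 1), (-1) ^ m * ((b + 3).multichoose m : ℝ) * D m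
          - ∑ m ∈ range (n + 1), (-1) ^ m * ((b + 2).multichoose m : ℝ) * D m := by
        rw [multiPolyBernoulli_eq_sum_fwdDiff_iter, mul_sum, ← sum_sub_distrib]
        refine sum_congr rfl fun m _ ↦ ?_
        rw [hchain]
        ring
    _ = 2 * ((3 : ℝ) + b) ^ n - ((2 : ℝ) + b) ^ n := by
        rw [← newton, ← newton]
        push_cast
        ring
end

section
/- For every integer b ≥ 0 and all n ≥ 1, 2(3+b)^{n+4} − (2+b)^{n+4} ≡ 2(3+b)^n − (2+b)^n (mod 10); that is, the last digit of B^{(−2,0,...,0)}_n (with b trailing zeros) has period 4. -/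
lemma pow5 : ∀ x : ZMod 10, x ^ 5 = x := by decide

theorem stmt14 (b n : ℕ) (hn : 1 ≤ n) :
    2 * ((3 : ℤ) + b) ^ (n + 4) - ((2 : ℤ) + b) ^ (n + 4) ≡
      2 * ((3 : ℤ) + b) ^ n - ((2 : ℤ) + b) ^ n [ZMOD 10] := by
  obtain ⟨m, rfl⟩ := Nat.exists_eq_add_of_le hn
  apply (ZMod.intCast_eq_intCast_iff _ _ 10).mp
  push_cast
  have key : ∀ x : ZMod 10, x ^ (1 + m + 4) = x ^ (1 + m) := by
    intro x
    have : x ^ (1 + m + 4) = x ^ 5 * x ^ m := by ring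
    rw [this, pow5 x]; ring
  rw [key, key]
end

section
/- For every integer b ≥ 0 and all n ≥ 1, p^{3+b}_1(n) = Σ_{s=1}^{n} C(n,s) (−1)^{s+1} (2(3+b)^s − (2+b)^s) · p^{3+b}_1(n−s). -/
/-!
Write `p r 1 k = ∑ₜ (r + t)^k / 2^(t+1)`. By the binomial theorem, weighting the terms of this series
by `C(n,s) (-1)^s (2 r^s - (r-1)^s)` and summing over `s` turns `(r + t)^(n-s)` into
`2 t^n - (t+1)^n`, so the weighted sum is the telescoping series `∑ₜ (t^n/2^t - (t+1)^n/2^(t+1))`,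
which equals `0^n = 0` for `n ≥ 1`. The recurrence is this vanishing with the `s = 0` term isolated.
-/

open Finset

theorem sum_range_choose_mul_neg_one_pow_mul_pow {R : Type*} [CommRing R] (x y : R) (n : ℕ) :
    ∑ s ∈ range (n + 1), (n.choose s : R) * (-1) ^ s * x ^ s * y ^ (n - s) = (y - x) ^ n := by
  rw [sub_eq_neg_add, add_pow]
  refine sum_congr rfl fun s _ => ?_
  rw [neg_pow]
  ring

theorem summable_natCast_pow_div_two_pow (k : ℕ) :
    Summable fun t : ℕ => (t : ℝ) ^ k / 2 ^ t := by
  simpa only [div_eq_mul_inv, inv_pow] using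
    summable_pow_mul_geometric_of_norm_lt_one (R := ℝ) k (r := 2⁻¹) (by norm_num)

theorem summable_natCast_add_pow_div_two_pow_succ (r k : ℕ) :
    Summable fun t : ℕ => ((r : ℝ) + t) ^ k / 2 ^ (t + 1) := by
  refine (((summable_nat_add_iff r).2 (summable_natCast_pow_div_two_pow k)).mul_left (2 ^ r / 2)).congr fun t => ?_
  push_cast
  rw [pow_add, pow_succ, add_comm (t : ℝ)]
  field_simp

theorem p_one_eq_tsum (r k : ℕ) : p r 1 k = ∑' t : ℕ, ((r : ℝ) + t) ^ k / 2 ^ (t + 1) := by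
  refine tsum_congr fun t => ?_
  simp [add_comm 1 t]

theorem tsum_two_mul_pow_sub_succ_pow_div_two_pow_succ {n : ℕ} (hn : n ≠ 0) :
    ∑' t : ℕ, (2 * (t : ℝ) ^ n - ((t : ℝ) + 1) ^ n) / 2 ^ (t + 1) = 0 := by
  set f : ℕ → ℝ := fun t => (t : ℝ) ^ n / 2 ^ t
  have hf : Summable f := summable_natCast_pow_div_two_pow n
  have hf_succ : Summable fun t => f (t + 1) := (summable_nat_add_iff 1).2 hf
  have htelescope : ∀ t : ℕ,
      (2 * (t : ℝ) ^ n - ((t : ℝ) + 1) ^ n) / 2 ^ (t + 1) = f t - f (t + 1) := by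
    intro t
    simp only [f, Nat.cast_succ, pow_succ]
    field_simp
  rw [tsum_congr htelescope, hf.tsum_sub hf_succ, hf.tsum_eq_zero_add]
  simp [f, hn]

theorem sum_range_choose_mul_p_one_eq_zero (r : ℕ) {n : ℕ} (hn : n ≠ 0) :
    ∑ s ∈ range (n + 1), (n.choose s : ℝ) * (-1) ^ s * (2 * (r : ℝ) ^ s - ((r : ℝ) - 1) ^ s) *
      p r 1 (n - s) = 0 := by
  set c : ℕ → ℝ := fun s => (n.choose s : ℝ) * (-1) ^ s * (2 * (r : ℝ) ^ s - ((r : ℝ) - 1) ^ s)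
  have hbinom : ∀ t : ℕ, ∑ s ∈ range (n + 1), c s * (((r : ℝ) + t) ^ (n - s) / 2 ^ (t + 1)) =
      (2 * (t : ℝ) ^ n - ((t : ℝ) + 1) ^ n) / 2 ^ (t + 1) := by
    intro t
    have h₁ := sum_range_choose_mul_neg_one_pow_mul_pow (r : ℝ) ((r : ℝ) + t) n
    have h₂ := sum_range_choose_mul_neg_one_pow_mul_pow ((r : ℝ) - 1) ((r : ℝ) + t) n
    rw [show (r : ℝ) + t - r = t by ring] at h₁
    rw [show (r : ℝ) + t - (r - 1) = t + 1 by ring] at h₂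
    rw [← h₁, ← h₂, mul_sum, ← sum_sub_distrib, sum_div]
    refine sum_congr rfl fun s _ => ?_
    ring
  calc ∑ s ∈ range (n + 1), c s * p r 1 (n - s)
      = ∑' t : ℕ, ∑ s ∈ range (n + 1), c s * (((r : ℝ) + t) ^ (n - s) / 2 ^ (t + 1)) := by
        simp_rw [p_one_eq_tsum, ← tsum_mul_left]
        exact (Summable.tsum_finsetSum fun s _ =>
          (summable_natCast_add_pow_div_two_pow_succ r (n - s)).mul_left (c s)).symm
    _ = 0 := by
        rw [tsum_congr hbinom, tsum_two_mul_pow_sub_succ_pow_div_two_pow_succ hn]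

theorem p_one_eq_sum_Icc (r : ℕ) {n : ℕ} (hn : n ≠ 0) :
    p r 1 n = ∑ s ∈ Icc 1 n, (n.choose s : ℝ) * (-1) ^ (s + 1) *
      (2 * (r : ℝ) ^ s - ((r : ℝ) - 1) ^ s) * p r 1 (n - s) := by
  have h := sum_range_choose_mul_p_one_eq_zero r hn
  rw [range_eq_Ico, sum_eq_sum_Ico_succ_bot n.zero_lt_succ, zero_add, Nat.succ_eq_add_one,
    Ico_add_one_right_eq_Icc] at h
  norm_num only [Nat.choose_zero_right, Nat.cast_one, pow_zero, one_mul, Nat.sub_zero] at h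
  rw [eq_neg_of_add_eq_zero_left h, ← sum_neg_distrib]
  refine sum_congr rfl fun s _ => ?_
  ring

/-- `2(3+b)^s - (2+b)^s` is the multi-poly-Bernoulli number `B^{(-2,0,...,0)}_s`
with `b` trailing zeros. -/
theorem stmt15 (b n : ℕ) (hn : 1 ≤ n) :
    p (3 + b) 1 n = ∑ s ∈ Finset.Icc 1 n, (n.choose s : ℝ) * (-1) ^ (s + 1) *
      (2 * ((3 : ℝ) + b) ^ s - ((2 : ℝ) + b) ^ s) * p (3 + b) 1 (n - s) := by
  have hcast : ((3 + b : ℕ) : ℝ) = 3 + b := by push_cast; rfl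
  have hcast_pred : ((3 + b : ℕ) : ℝ) - 1 = 2 + b := by rw [hcast]; ring
  rw [p_one_eq_sum_Icc (3 + b) (by omega), hcast_pred, hcast]
end

section
/- For fixed integers j_1 ≥ 0 and b = 1, the numbers U^{(−j_1)}_n defined by the EGF Li_{−j_1}(1−e^{−m})/(1−e^{−m}) · e^{−m} satisfy U^{(−j_1)}_{n+4} ≡ U^{(−j_1)}_n (mod 10) for all n ≥ 1. -/
/-!
Only finitely many terms of the series defining `U (-j) n` are nonzero: the inner sum over `i`
is, up to sign, the `s`-th forward difference of `x ↦ x ^ n`, which vanishes for `s > n`.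
Hence `U (-j) n` is an integer combination of the powers `(-(i+1)) ^ n`, and the claim follows
from `a ^ (n + 4) ≡ a ^ n (mod 10)` for `n ≥ 1`, i.e. `x ^ 5 = x` in `ZMod 10`.
-/

/-- The numbers `U^{(j)}_n` (`b = 1`), defined by the exponential generating function
`Li_j(1-e^{-m})/(1-e^{-m}) · e^{-m} = \sum_{s \ge 0} (1-e^{-m})^s e^{-m} / (s+1)^j`:
extracting the coefficient of `m^n/n!` of
`(1-e^{-m})^s e^{-m} = \sum_i C(s,i)(-1)^i e^{-(i+1)m}` term by term gives this
(finitely supported, hence convergent) series. -/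
noncomputable def U (j : ℤ) (n : ℕ) : ℝ :=
  ∑' s : ℕ, ((s : ℝ) + 1) ^ (-j) *
    ∑ i ∈ Finset.range (s + 1), (s.choose i : ℝ) * (-1) ^ i * (-((i : ℝ) + 1)) ^ n

open Finset

theorem sum_range_neg_one_pow_mul_choose_mul_add_pow_eq_zero {R : Type*} [CommRing R]
    {n s : ℕ} (h : n < s) (y : R) :
    ∑ i ∈ range (s + 1), (-1) ^ i * (s.choose i : R) * (y + i) ^ n = 0 := by
  have hΔ := congrFun (fwdDiff_iter_pow_eq_zero_of_lt (R := R) h) y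
  rw [fwdDiff_iter_eq_sum_shift] at hΔ
  calc _ = (-1) ^ s * ∑ i ∈ range (s + 1),
          ((-1 : ℤ) ^ (s - i) * s.choose i) • (y + i • 1) ^ n := by
        rw [mul_sum]
        refine sum_congr rfl fun i hi => ?_
        have hsign : (-1 : R) ^ i = (-1) ^ s * (-1) ^ (s - i) := by
          rw [← pow_add, ← Nat.sub_add_cancel (Nat.lt_succ_iff.mp (mem_range.mp hi)),
            Nat.add_sub_cancel, add_comm, ← add_assoc, ← two_mul, pow_add, pow_mul]
          simp
        rw [zsmul_eq_mul, nsmul_one, hsign]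
        push_cast
        ring
    _ = 0 := by rw [hΔ]; simp

theorem Int.ten_dvd_pow_add_four_sub_pow (a : ℤ) {n : ℕ} (hn : n ≠ 0) :
    (10 : ℤ) ∣ a ^ (n + 4) - a ^ n := by
  have hfermat : ∀ x : ZMod 10, x ^ 5 = x := by decide
  obtain ⟨m, rfl⟩ := Nat.exists_eq_succ_of_ne_zero hn
  refine (ZMod.intCast_zmod_eq_zero_iff_dvd _ 10).mp ?_
  push_cast
  rw [show m.succ + 4 = m + 5 by omega, pow_succ _ m, pow_add, hfermat, sub_self]

/-- The inner sum in the definition of `U`, as an integer. -/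
def binomSum (s n : ℕ) : ℤ :=
  ∑ i ∈ range (s + 1), (s.choose i : ℤ) * (-1) ^ i * (-((i : ℤ) + 1)) ^ n

theorem binomSum_eq_zero_of_lt {s n : ℕ} (h : n < s) : binomSum s n = 0 := by
  have hzero := sum_range_neg_one_pow_mul_choose_mul_add_pow_eq_zero h (1 : ℤ)
  calc binomSum s n
      = (-1) ^ n * ∑ i ∈ range (s + 1), (-1) ^ i * (s.choose i : ℤ) * (1 + i) ^ n := by
        rw [binomSum, mul_sum]
        refine sum_congr rfl fun i _ => ?_
        rw [neg_pow ((i : ℤ) + 1), add_comm (1 : ℤ)]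
        ring
    _ = 0 := by rw [hzero, mul_zero]

theorem ten_dvd_binomSum_add_four_sub (s : ℕ) {n : ℕ} (hn : n ≠ 0) :
    (10 : ℤ) ∣ binomSum s (n + 4) - binomSum s n := by
  rw [binomSum, binomSum, ← sum_sub_distrib]
  refine dvd_sum fun i _ => ?_
  rw [← mul_sub]
  exact dvd_mul_of_dvd_right (Int.ten_dvd_pow_add_four_sub_pow _ hn) _

theorem U_neg_natCast_eq_sum (j : ℕ) {n N : ℕ} (hN : n < N) :
    U (-(j : ℤ)) n = ((∑ s ∈ range N, ((s : ℤ) + 1) ^ j * binomSum s n : ℤ) : ℝ) := by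
  have hterm : ∀ s : ℕ, ((s : ℝ) + 1) ^ (-(-(j : ℤ))) *
      ∑ i ∈ range (s + 1), (s.choose i : ℝ) * (-1) ^ i * (-((i : ℝ) + 1)) ^ n
        = ((((s : ℤ) + 1) ^ j * binomSum s n : ℤ) : ℝ) := by
    intro s
    rw [neg_neg, zpow_natCast, binomSum]
    push_cast
    rfl
  rw [U, tsum_eq_sum (s := range N) fun s hs => ?_, Int.cast_sum]
  · exact sum_congr rfl fun s _ => hterm s
  · rw [hterm, binomSum_eq_zero_of_lt (by rw [mem_range] at hs; omega), mul_zero, Int.cast_zero]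

/-- For negative index `-j₁`, the last digit of `U^{(-j₁)}_n` has a four cycle
(the values are integers). -/
theorem stmt18 (j1 : ℕ) (n : ℕ) (hn : 1 ≤ n) :
    ∃ k : ℤ, U (-(j1 : ℤ)) (n + 4) - U (-(j1 : ℤ)) n = 10 * k := by
  obtain ⟨k, hk⟩ : (10 : ℤ) ∣ ∑ s ∈ range (n + 5), ((s : ℤ) + 1) ^ j1 *
      (binomSum s (n + 4) - binomSum s n) :=
    dvd_sum fun s _ => dvd_mul_of_dvd_right (ten_dvd_binomSum_add_four_sub s (by omega)) _
  refine ⟨k, ?_⟩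
  rw [U_neg_natCast_eq_sum j1 (N := n + 5) (by omega),
    U_neg_natCast_eq_sum j1 (N := n + 5) (by omega), ← Int.cast_sub, ← sum_sub_distrib]
  simp_rw [← mul_sub]
  exact_mod_cast hk
end
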